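/- For a sequence of B-counter operations, the maximal counter value reached (starting from 0, where i increments, r resets to 0, n does nothing) equals the maximal component of its counter profile: max over the defined entries among i⁺←, c_max, i⁺→ if a reset occurs, and i⁺← if no reset occurs. In particular the maximal counter value of a word equals that of its reverse. -/

import Mathlib

/-!
Cutting a word at a reset splits the run of the counter as well as the block list:
`maxVal (u ++ r :: v) = max (maxVal u) (maxVal v)` and
`blocks (u ++ r :: v) = blocks u ++ blocks v`, while on a reset-free word both reduce to the
number of increments. Hence `maxVal w` is the maximum of `blocks w`, which is also the maximal
defined entry of the profile; and since `blocks` commutes with reversal, so does `maxVal`.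
-/

/-- Counter operations of B-automata / RPRS: increment, reset, no-op. -/
inductive Op : Type
  | inc | res | nop
deriving DecidableEq

/-- Counter profiles: triples `(i⁺←, c_max, i⁺→)` over `ℕ ∪ {⊥}`. -/
abbrev CP : Type := Option ℕ × Option ℕ × Option ℕ

/-- Order on `ℕ ∪ {⊥}`: numbers canonically, `⊥` only comparable with itself. -/
def ole : Option ℕ → Option ℕ → Prop
  | some m, some n => m ≤ n
  | none, none => True
  | _, _ => False

/-- Component-wise order on counter profiles. -/
def le3 (p q : CP) : Prop := ole p.1 q.1 ∧ ole p.2.1 q.2.1 ∧ ole p.2.2 q.2.2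

/-- Strict component-wise order on counter profiles. -/
def lt3 (p q : CP) : Prop := le3 p q ∧ ¬ le3 q p

/-- The list of numbers of increments in the blocks of a counter-operation
sequence delimited by resets (read left to right; always nonempty). -/
def blocks : List Op → List ℕ
  | [] => [0]
  | Op.inc :: w =>
      match blocks w with
      | [] => [1]
      | b :: bs => (b + 1) :: bs
  | Op.nop :: w => blocks w
  | Op.res :: w => 0 :: blocks w

/-- The counter profile of a counter-operation sequence. -/
def Profile (w : List Op) : CP :=
  match blocks w with
  | [] => (some 0, none, none)
  | [b] => (some b, none, none)
  | b :: bs =>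
      (some b,
       if 2 ≤ bs.length then some (bs.dropLast.foldr max 0) else none,
       some (bs.getLast!))

/-- A profile is valid if it arises from some counter-operation sequence. -/
def ValidCP (p : CP) : Prop := ∃ w : List Op, Profile w = p

/-- The neutral counter profile. -/
def cpOne : CP := (some 0, none, none)

/-- Concatenation of counter profiles (induced by word concatenation). -/
def pcomp : CP → CP → CP
  | (a, _, none), (a', c', d') => (Option.map₂ (· + ·) a a', c', d')
  | (a, c, some d), (a', _, none) => (a, c, some (d + a'.getD 0))
  | (a, c, some d), (a', c', some d') =>
      (a, some (max (c.getD 0) (max (c'.getD 0) (d + a'.getD 0))), some d')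

/-- Counter value after executing a sequence of counter operations
(starting from 0; `inc` adds 1, `res` resets to 0, `nop` does nothing). -/
def cval (w : List Op) : ℕ :=
  w.foldl (fun acc op =>
    match op with
    | Op.inc => acc + 1
    | Op.res => 0
    | Op.nop => acc) 0

/-- The maximal counter value reached during the execution of `w`:
maximum over all prefixes of `w` of the counter value after that prefix. -/
def maxVal (w : List Op) : ℕ := (w.inits.map cval).foldr max 0

/-- The maximal defined entry of a counter profile. -/
def maxEntry (p : CP) : ℕ := max (p.1.getD 0) (max (p.2.1.getD 0) (p.2.2.getD 0))

theorem foldr_max_zero_eq_sup (l : List ℕ) : l.foldr max 0 = (l : Multiset ℕ).sup :=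
  (Multiset.sup_coe l).symm

theorem foldr_max_zero_append (l₁ l₂ : List ℕ) :
    (l₁ ++ l₂).foldr max 0 = max (l₁.foldr max 0) (l₂.foldr max 0) := by
  simp only [foldr_max_zero_eq_sup, ← Multiset.coe_add, Multiset.sup_add]

theorem foldr_max_zero_reverse (l : List ℕ) : l.reverse.foldr max 0 = l.foldr max 0 := by
  simp only [foldr_max_zero_eq_sup, Multiset.coe_reverse]

@[elab_as_elim]
theorem Op.induction_on_res {motive : List Op → Prop} (w : List Op)
    (resFree : ∀ w, Op.res ∉ w → motive w)
    (splitAtRes : ∀ u v, motive u → motive v → motive (u ++ Op.res :: v)) : motive w := by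
  induction h : w.length using Nat.strong_induction_on generalizing w with
  | _ n ih =>
    by_cases hres : Op.res ∈ w
    · obtain ⟨u, v, rfl⟩ := List.append_of_mem hres
      simp only [List.length_append, List.length_cons] at h
      exact splitAtRes u v (ih _ (by omega) u rfl) (ih _ (by omega) v rfl)
    · exact resFree w hres

theorem blocks_ne_nil (w : List Op) : blocks w ≠ [] := by
  induction w with
  | nil => simp [blocks]
  | cons a w ih =>
    cases a
    · obtain ⟨b, bs, hw⟩ := List.exists_cons_of_ne_nil ih
      simp [blocks, hw]
    · simp [blocks]
    · simpa [blocks] using ih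

theorem blocks_of_res_not_mem {w : List Op} (hw : Op.res ∉ w) :
    blocks w = [w.count Op.inc] := by
  induction w with
  | nil => rfl
  | cons a w ih =>
    rw [List.mem_cons, not_or] at hw
    cases a
    · simp [blocks, ih hw.2]
    · exact absurd rfl hw.1
    · simp [blocks, ih hw.2]

theorem blocks_append_res_append (u v : List Op) :
    blocks (u ++ Op.res :: v) = blocks u ++ blocks v := by
  induction u with
  | nil => rfl
  | cons a u ih =>
    cases a
    · obtain ⟨b, bs, hu⟩ := List.exists_cons_of_ne_nil (blocks_ne_nil u)
      simp [blocks, ih, hu]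
    · simp [blocks, ih]
    · simp [blocks, ih]

theorem blocks_reverse (w : List Op) : blocks w.reverse = (blocks w).reverse := by
  induction w using Op.induction_on_res with
  | resFree w hw =>
    rw [blocks_of_res_not_mem hw, blocks_of_res_not_mem (by simpa using hw), List.count_reverse,
      List.reverse_singleton]
  | splitAtRes u v hu hv =>
    simp [blocks_append_res_append, hu, hv]

theorem cval_of_res_not_mem {w : List Op} (hw : Op.res ∉ w) : cval w = w.count Op.inc := by
  induction w using List.reverseRecOn with
  | nil => rfl
  | append_singleton w a ih =>
    simp only [List.mem_append, List.mem_singleton, not_or] at hw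
    rw [cval, List.foldl_concat, ← cval, ih hw.1]
    cases a <;> simp_all

theorem maxVal_of_res_not_mem {w : List Op} (hw : Op.res ∉ w) : maxVal w = w.count Op.inc := by
  refine le_antisymm (List.max_le_of_forall_le _ _ ?_) (List.le_max_of_le ?_ le_rfl)
  · simp only [List.mem_map, List.mem_inits, forall_exists_index, and_imp]
    rintro _ p hp rfl
    rw [cval_of_res_not_mem fun h => hw (hp.subset h)]
    exact hp.count_le _
  · exact List.mem_map.mpr ⟨w, List.mem_inits _ _ |>.mpr (List.prefix_refl w),
      cval_of_res_not_mem hw⟩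

theorem cval_append_res_append (u v : List Op) : cval (u ++ Op.res :: v) = cval v := by
  simp only [cval, List.foldl_append, List.foldl_cons]

theorem maxVal_append_res_append (u v : List Op) :
    maxVal (u ++ Op.res :: v) = max (maxVal u) (maxVal v) := by
  simp only [maxVal, List.inits_append, List.inits_cons, List.tail_cons, List.map_append,
    List.map_map, Function.comp_def, cval_append_res_append, foldr_max_zero_append]

theorem maxVal_eq_foldr_max_blocks (w : List Op) : maxVal w = (blocks w).foldr max 0 := by
  induction w using Op.induction_on_res with
  | resFree w hw => simp [maxVal_of_res_not_mem hw, blocks_of_res_not_mem hw]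
  | splitAtRes u v hu hv =>
    rw [maxVal_append_res_append, blocks_append_res_append, foldr_max_zero_append, hu, hv]

theorem maxEntry_profile (w : List Op) : maxEntry (Profile w) = (blocks w).foldr max 0 := by
  unfold Profile
  rcases blocks w with _ | ⟨b, _ | ⟨c, cs⟩⟩
  · rfl
  · simp [maxEntry]
  · obtain ⟨l, x, hl⟩ :=
      (List.eq_nil_or_concat' (c :: cs)).resolve_left (List.cons_ne_nil c cs)
    have hlast : (l ++ [x]).getLast! = x := by simp
    dsimp only
    rw [hl, List.foldr_cons, foldr_max_zero_append]
    simp only [maxEntry, List.dropLast_concat, hlast, Option.getD_some]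
    -- `c_max` is `⊥` only when `l = []`, whose maximum is `0` anyway
    rcases l with _ | ⟨d, ds⟩ <;> simp

/-- The maximal counter value of a counter-operation sequence equals the
maximal defined component of its counter profile; in particular it is
invariant under reversing the word. -/
theorem maxVal_eq_maxEntry_profile :
    (∀ w : List Op, maxVal w = maxEntry (Profile w)) ∧
    (∀ w : List Op, maxVal w.reverse = maxVal w) := by
  refine ⟨fun w => ?_, fun w => ?_⟩
  · rw [maxVal_eq_foldr_max_blocks, maxEntry_profile]
  · rw [maxVal_eq_foldr_max_blocks, maxVal_eq_foldr_max_blocks, blocks_reverse,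
      foldr_max_zero_reverse]
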